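/- arXiv:2310.13776 — 6 statements merged into one kernel-verified Lean document; each statement's English description precedes it below -/
import Mathlib

section
/- Every irreducible G-subrepresentation M of ℂ[A] is the ℂ-linear span of a set Φ of characters of A; moreover, any two distinct irreducible G-subrepresentations of ℂ[A] are non-isomorphic (each isomorphism class of irreducible G-representation occurs in ℂ[A] with multiplicity at most one), and for each irreducible G-subrepresentation M of ℂ[A], the subspace of H-fixed vectors of M is one-dimensional. -/
noncomputable section

variable {A : Type*} [CommGroup A] [Fintype A]

/-- The semidirect product `G = A ⋊ H`, for `H` a subgroup of `Aut(A)`. -/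
abbrev Gsd (H : Subgroup (MulAut A)) : Type _ := A ⋊[H.subtype] H

/-- The `G`-representation on `ℂ[A] = (A → ℂ)`: `a₀ ∈ A` acts by `(a₀·f)(x) = f(x·a₀)` and
`h ∈ H` acts by `(h·f)(x) = f(h⁻¹ x)`. -/
def rho (H : Subgroup (MulAut A)) (g : Gsd H) : (A → ℂ) →ₗ[ℂ] (A → ℂ) where
  toFun f := fun x => f (((g.right : MulAut A))⁻¹ (x * g.left))
  map_add' _ _ := rfl
  map_smul' _ _ := rfl

/-- `M` is a `G`-subrepresentation of `ℂ[A]`. -/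
def IsSubrep (H : Subgroup (MulAut A)) (M : Submodule ℂ (A → ℂ)) : Prop :=
  ∀ (g : Gsd H) (f : A → ℂ), f ∈ M → rho H g f ∈ M

/-- `M` is an irreducible `G`-subrepresentation of `ℂ[A]`. -/
def IsIrred (H : Subgroup (MulAut A)) (M : Submodule ℂ (A → ℂ)) : Prop :=
  M ≠ ⊥ ∧ ∀ N : Submodule ℂ (A → ℂ), N ≤ M → IsSubrep H N → N = ⊥ ∨ N = M

/-- A character `χ : A →* ℂ` regarded as an element of `ℂ[A] = (A → ℂ)`. -/
def charFun (χ : A →* ℂ) : A → ℂ := fun a => χ a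

/-- `N` and `M` are isomorphic as `G`-representations: there is an injective `ℂ`-linear
`G`-equivariant map defined on `N` with image `M`. -/
def SubrepIso (H : Subgroup (MulAut A)) (N M : Submodule ℂ (A → ℂ)) : Prop :=
  ∃ T : ↥N →ₗ[ℂ] (A → ℂ),
    Function.Injective T ∧ LinearMap.range T = M ∧
    ∀ (g : Gsd H) (m m' : ↥N),
      (m' : A → ℂ) = rho H g (m : A → ℂ) → T m' = rho H g (T m)

/-- The subspace of `H`-fixed vectors of `M`. -/
def fixedH (H : Subgroup (MulAut A)) (M : Submodule ℂ (A → ℂ)) :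
    Submodule ℂ (A → ℂ) where
  carrier := {f | f ∈ M ∧ ∀ h : H, rho H (SemidirectProduct.inr h) f = f}
  add_mem' := by
    rintro f g ⟨hf, hf2⟩ ⟨hg, hg2⟩
    exact ⟨M.add_mem hf hg, fun h => by rw [map_add, hf2 h, hg2 h]⟩
  zero_mem' := ⟨M.zero_mem, fun _ => map_zero _⟩
  smul_mem' := by
    rintro c f ⟨hf, hf2⟩
    exact ⟨M.smul_mem c hf, fun h => by rw [map_smul, hf2 h]⟩

/-!
Translation by `a` multiplies each character `χ` by `χ a`, and the characters form a basis of
`ℂ[A]`. Averaging the translates of `f` against `χ⁻¹` projects `f` onto its `χ`-component, so a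
translation-invariant subspace is spanned by the characters it contains. A `G`-equivariant
embedding sends a character, being an eigenvector for all translations, to a multiple of itself;
hence an isomorphic copy of an irreducible `M` lies inside `M` and equals it. The span of an
`H`-orbit of characters is already a subrepresentation, so the characters in an irreducible `M`
form one `H`-orbit; an `H`-fixed vector of `M` then has constant coefficients on that orbit and
is a multiple of the orbit sum.
-/

set_option linter.unusedSectionVars false

open Finset SemidirectProduct Submodule

instance : MulAction (MulAut A) (A →* ℂ) where
  smul h χ := χ.comp (h⁻¹ : MulAut A).toMonoidHom
  one_smul _ := rfl
  mul_smul _ _ _ := rfl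

@[simp]
lemma MulAut.smul_monoidHom_apply (h : MulAut A) (χ : A →* ℂ) (a : A) :
    (h • χ) a = χ (h⁻¹ a) :=
  rfl

@[simp]
lemma rho_apply (H : Subgroup (MulAut A)) (g : Gsd H) (f : A → ℂ) (x : A) :
    rho H g f x = f ((g.right : MulAut A)⁻¹ (x * g.left)) := rfl

lemma charFun_ne_zero (χ : A →* ℂ) : charFun χ ≠ 0 := fun h => by
  simpa [charFun] using congrFun h 1

def charBasis : Module.Basis (A →* ℂ) ℂ (A → ℂ) :=
  ((AddChar.complexBasis (Additive A)).reindex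
      (AddChar.toMonoidHomEquiv.trans
        (MulEquiv.multiplicativeAdditive A).monoidHomCongrLeft.toEquiv)).map
    (LinearEquiv.funCongrLeft ℂ ℂ Additive.ofMul)

lemma charBasis_apply (χ : A →* ℂ) : charBasis χ = charFun χ := by
  ext a
  simp [charBasis, charFun]

lemma coe_charBasis : ⇑(charBasis (A := A)) = charFun := funext charBasis_apply

lemma charBasis_repr_charFun (χ : A →* ℂ) :
    charBasis.repr (charFun χ) = Finsupp.single χ 1 := by
  rw [← charBasis_apply, Module.Basis.repr_self]

lemma charBasis_repr_sum_charFun (s : Finset (A →* ℂ)) (χ : A →* ℂ) :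
    charBasis.repr (∑ ψ ∈ s, charFun ψ) χ = if χ ∈ s then 1 else 0 := by
  classical
  simp [charBasis_repr_charFun, Finsupp.single_apply]

instance : Fintype (A →* ℂ) := FiniteDimensional.fintypeBasisIndex charBasis

open Classical in
lemma sum_char_inv_mul_char (χ ψ : A →* ℂ) :
    ∑ a, χ a⁻¹ * ψ a = if ψ = χ then (Fintype.card A : ℂ) else 0 := by
  have hone : χ.comp invMonoidHom * ψ = 1 ↔ ψ = χ := by
    refine ⟨fun h => MonoidHom.ext fun a => ?_, fun h => MonoidHom.ext fun a => ?_⟩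
    · have ha : χ a⁻¹ * ψ a = 1 := DFunLike.congr_fun h a
      calc ψ a = χ a * χ a⁻¹ * ψ a := by rw [← map_mul, mul_inv_cancel, map_one, one_mul]
        _ = χ a := by rw [mul_assoc, ha, mul_one]
    · change χ a⁻¹ * ψ a = 1
      rw [h, ← map_mul, inv_mul_cancel, map_one]
  simpa [hone] using sum_hom_units (χ.comp invMonoidHom * ψ)

section Representation

variable {H : Subgroup (MulAut A)} {M N : Submodule ℂ (A → ℂ)}

variable (H) in
lemma rho_charFun (g : Gsd H) (χ : A →* ℂ) :
    rho H g (charFun χ) = χ ((g.right : MulAut A)⁻¹ g.left) • charFun (g.right • χ) := by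
  ext x
  simp [charFun, mul_comm x, Subgroup.smul_def]

variable (H) in
lemma rho_inl_charFun (a : A) (χ : A →* ℂ) : rho H (inl a) (charFun χ) = χ a • charFun χ := by
  ext x
  simp [charFun, mul_comm]

lemma rho_inr_charFun (h : H) (χ : A →* ℂ) : rho H (inr h) (charFun χ) = charFun (h • χ) := by
  ext x
  simp [charFun, Subgroup.smul_def]

variable (H) in
lemma charBasis_repr_rho_inl (a : A) (f : A → ℂ) (χ : A →* ℂ) :
    charBasis.repr (rho H (inl a) f) χ = χ a * charBasis.repr f χ := by
  have : (charBasis.coord χ).comp (rho H (inl a)) = χ a • charBasis.coord χ :=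
    charBasis.ext fun ψ => by
      by_cases hψ : ψ = χ
      · subst hψ; simp [charBasis_apply, rho_inl_charFun, charBasis_repr_charFun]
      · simp [charBasis_apply, rho_inl_charFun, charBasis_repr_charFun, hψ]
  exact LinearMap.congr_fun this f

lemma charBasis_repr_rho_inr (h : H) (f : A → ℂ) (χ : A →* ℂ) :
    charBasis.repr (rho H (inr h) f) χ = charBasis.repr f (h⁻¹ • χ) := by
  have : (charBasis.coord χ).comp (rho H (inr h)) = charBasis.coord (h⁻¹ • χ) :=
    charBasis.ext fun ψ => by
      simp [charBasis_apply, rho_inr_charFun, charBasis_repr_charFun, Finsupp.single_apply,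
        smul_eq_iff_eq_inv_smul]
  exact LinearMap.congr_fun this f

variable (H) in
lemma sum_smul_rho_inl (χ : A →* ℂ) (f : A → ℂ) :
    ∑ a, χ a⁻¹ • rho H (inl a) f = ((Fintype.card A : ℂ) * charBasis.repr f χ) • charFun χ := by
  classical
  refine charBasis.ext_elem fun ψ => ?_
  simp only [map_sum, map_smul, Finsupp.coe_finsetSum, Finset.sum_apply, Finsupp.smul_apply,
    charBasis_repr_rho_inl, charBasis_repr_charFun, smul_eq_mul, ← mul_assoc, ← Finset.sum_mul,
    sum_char_inv_mul_char, Finsupp.single_apply]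
  by_cases hψ : ψ = χ
  · simp [hψ]
  · simp [hψ, Ne.symm hψ]

variable (H M) in
def IsTranslationInvariant : Prop := ∀ a : A, ∀ f ∈ M, rho H (inl a) f ∈ M

lemma IsSubrep.isTranslationInvariant (hM : IsSubrep H M) : IsTranslationInvariant H M :=
  fun a => hM (inl a)

lemma charBasis_repr_smul_charFun_mem (hM : IsTranslationInvariant H M) {f : A → ℂ} (hf : f ∈ M)
    (χ : A →* ℂ) : charBasis.repr f χ • charFun χ ∈ M := by
  have hcard : (Fintype.card A : ℂ) ≠ 0 := Nat.cast_ne_zero.2 Fintype.card_ne_zero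
  have hproj := M.sum_mem (t := univ) fun a _ => M.smul_mem (χ a⁻¹) (hM a f hf)
  rwa [sum_smul_rho_inl, mul_smul, M.smul_mem_iff hcard] at hproj

variable (M) in
open Classical in
def charsIn : Finset (A →* ℂ) := {χ | charFun χ ∈ M}

@[simp]
lemma mem_charsIn {χ : A →* ℂ} : χ ∈ charsIn M ↔ charFun χ ∈ M := by
  simp [charsIn]

lemma support_charBasis_repr_subset_charsIn (hM : IsTranslationInvariant H M) {f : A → ℂ}
    (hf : f ∈ M) : ↑(charBasis.repr f).support ⊆ (charsIn M : Set (A →* ℂ)) := fun χ hχ =>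
  mem_charsIn.2 <|
    (M.smul_mem_iff (Finsupp.mem_support_iff.1 hχ)).1 (charBasis_repr_smul_charFun_mem hM hf χ)

lemma eq_span_charsIn (hM : IsTranslationInvariant H M) : M = span ℂ (charFun '' charsIn M) := by
  refine le_antisymm (fun f hf => ?_) (span_le.2 ?_)
  · rw [← coe_charBasis, charBasis.mem_span_image]
    exact support_charBasis_repr_subset_charsIn hM hf
  · rintro _ ⟨χ, hχ, rfl⟩
    exact mem_charsIn.1 hχ

lemma charsIn_nonempty (hM : IsTranslationInvariant H M) (hM₀ : M ≠ ⊥) :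
    (charsIn M).Nonempty := by
  rw [Finset.nonempty_iff_ne_empty]
  intro h
  rw [eq_span_charsIn hM, h, coe_empty, Set.image_empty, span_empty] at hM₀
  exact hM₀ rfl

variable (H) in
lemma eq_smul_charFun_of_rho_inl_eq {χ : A →* ℂ} {v : A → ℂ}
    (hv : ∀ a, rho H (inl a) v = χ a • v) : v = v 1 • charFun χ := by
  funext a
  simpa [charFun, mul_comm] using congrFun (hv a) 1

lemma charFun_mem_of_subrepIso (hNM : SubrepIso H N M) {χ : A →* ℂ} (hχ : charFun χ ∈ N) :
    charFun χ ∈ M := by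
  obtain ⟨T, hT_inj, hT_range, hT_equiv⟩ := hNM
  have hvM : T ⟨charFun χ, hχ⟩ ∈ M := hT_range ▸ LinearMap.mem_range_self T _
  have hv : ∀ a, rho H (inl a) (T ⟨charFun χ, hχ⟩) = χ a • T ⟨charFun χ, hχ⟩ := fun a => by
    rw [← map_smul]
    exact (hT_equiv (inl a) _ _ (rho_inl_charFun H a χ).symm).symm
  have hv₀ : T ⟨charFun χ, hχ⟩ ≠ 0 :=
    (map_ne_zero_iff T hT_inj).2 fun h => charFun_ne_zero χ (congrArg Subtype.val h)
  rw [eq_smul_charFun_of_rho_inl_eq H hv] at hvM hv₀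
  exact (M.smul_mem_iff (left_ne_zero_of_smul hv₀)).1 hvM

lemma le_of_subrepIso (hN : IsSubrep H N) (hNM : SubrepIso H N M) : N ≤ M := by
  rw [eq_span_charsIn hN.isTranslationInvariant, span_le]
  rintro _ ⟨χ, hχ, rfl⟩
  exact charFun_mem_of_subrepIso hNM (mem_charsIn.1 hχ)

lemma smul_mem_charsIn_iff (hM : IsSubrep H M) (h : H) {χ : A →* ℂ} :
    h • χ ∈ charsIn M ↔ χ ∈ charsIn M := by
  have hstable : ∀ (h : H) (χ : A →* ℂ), χ ∈ charsIn M → h • χ ∈ charsIn M := fun h χ hχ => by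
    rw [mem_charsIn, ← rho_inr_charFun]
    exact hM _ _ (mem_charsIn.1 hχ)
  exact ⟨fun hχ => inv_smul_smul h χ ▸ hstable h⁻¹ _ hχ, hstable h χ⟩

variable (H) in
lemma isSubrep_span_orbit (χ : A →* ℂ) : IsSubrep H (span ℂ (charFun '' MulAction.orbit H χ)) := by
  intro g f hf
  have hmap := mem_map_of_mem (f := rho H g) hf
  rw [map_span, ← Set.image_comp] at hmap
  refine span_le.2 ?_ hmap
  rintro _ ⟨ψ, hψ, rfl⟩
  rw [Function.comp_apply, rho_charFun]
  exact smul_mem _ _ (subset_span ⟨_, MulAction.mem_orbit_of_mem_orbit g.right hψ, rfl⟩)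

lemma charsIn_subset_orbit (hM : IsSubrep H M) (hM_irr : IsIrred H M) {χ₀ : A →* ℂ}
    (hχ₀ : χ₀ ∈ charsIn M) : (charsIn M : Set (A →* ℂ)) ⊆ MulAction.orbit H χ₀ := by
  have hNM : span ℂ (charFun '' MulAction.orbit H χ₀) ≤ M := by
    rw [span_le]
    rintro _ ⟨χ, ⟨h, rfl⟩, rfl⟩
    exact mem_charsIn.1 ((smul_mem_charsIn_iff hM h).2 hχ₀)
  have hN₀ : span ℂ (charFun '' MulAction.orbit H χ₀) ≠ ⊥ := by
    rw [Ne, eq_bot_iff]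
    intro hN
    exact charFun_ne_zero χ₀
      ((mem_bot ℂ).1 (hN (subset_span ⟨χ₀, MulAction.mem_orbit_self χ₀, rfl⟩)))
  have hNeq := (hM_irr.2 _ hNM (isSubrep_span_orbit H χ₀)).resolve_left hN₀
  intro χ hχ
  rwa [mem_coe, mem_charsIn, ← hNeq, ← coe_charBasis, charBasis.mem_span_image,
    charBasis.repr_self, Finsupp.support_single _ one_ne_zero, coe_singleton,
    Set.singleton_subset_iff] at hχ

lemma fixedH_eq_span_sum_charsIn (hM : IsSubrep H M) (hM_irr : IsIrred H M) {χ₀ : A →* ℂ}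
    (hχ₀ : χ₀ ∈ charsIn M) : fixedH H M = span ℂ {∑ χ ∈ charsIn M, charFun χ} := by
  refine le_antisymm ?_ ?_
  · rintro f ⟨hfM, hf_fixed⟩
    refine mem_span_singleton.2 ⟨charBasis.repr f χ₀, charBasis.ext_elem fun χ => ?_⟩
    rw [map_smul, Finsupp.smul_apply, charBasis_repr_sum_charFun, smul_eq_mul]
    by_cases hχ : χ ∈ charsIn M
    · obtain ⟨h, rfl⟩ := charsIn_subset_orbit hM hM_irr hχ₀ hχ
      calc charBasis.repr f χ₀ * (if h • χ₀ ∈ charsIn M then 1 else 0)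
          = charBasis.repr (rho H (inr h⁻¹) f) χ₀ := by rw [if_pos hχ, mul_one, hf_fixed]
        _ = charBasis.repr f (h • χ₀) := by rw [charBasis_repr_rho_inr, inv_inv]
    · rw [if_neg hχ, mul_zero, eq_comm, ← Finsupp.notMem_support_iff]
      exact fun hχ' => hχ (support_charBasis_repr_subset_charsIn hM.isTranslationInvariant hfM hχ')
  · rw [span_singleton_le_iff_mem]
    refine ⟨sum_mem fun χ hχ => mem_charsIn.1 hχ, fun h => charBasis.ext_elem fun χ => ?_⟩
    simp only [charBasis_repr_rho_inr, charBasis_repr_sum_charFun, smul_mem_charsIn_iff hM]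

end Representation

/-- Every irreducible `G`-subrepresentation `M` of `ℂ[A]` is the span of a set `Φ`
of characters of `A`; distinct irreducible `G`-subrepresentations of `ℂ[A]` are non-isomorphic
(each isomorphism class occurs with multiplicity at most one); and the space of `H`-fixed
vectors of `M` is one-dimensional. -/
theorem statement_0 (H : Subgroup (MulAut A)) (M : Submodule ℂ (A → ℂ))
    (hM : IsSubrep H M) (hMirr : IsIrred H M) :
    (∃ Φ : Finset (A →* ℂ), M = Submodule.span ℂ (charFun '' ↑Φ)) ∧
    (∀ N : Submodule ℂ (A → ℂ), IsSubrep H N → IsIrred H N → N ≠ M →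
      ¬ SubrepIso H N M) ∧
    Module.finrank ℂ ↥(fixedH H M) = 1 := by
  refine ⟨⟨charsIn M, eq_span_charsIn hM.isTranslationInvariant⟩,
    fun N hN hN_irr hNM hiso => ?_, ?_⟩
  · exact hNM ((hMirr.2 N (le_of_subrepIso hN hiso) hN).resolve_left hN_irr.1)
  · obtain ⟨χ₀, hχ₀⟩ := charsIn_nonempty hM.isTranslationInvariant hMirr.1
    rw [fixedH_eq_span_sum_charsIn hM hMirr hχ₀]
    refine finrank_span_singleton fun hσ => ?_
    have hσχ₀ := congrArg (charBasis.repr · χ₀) hσ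
    simp only [charBasis_repr_sum_charFun, if_pos hχ₀, map_zero, Finsupp.zero_apply] at hσχ₀
    exact one_ne_zero hσχ₀
end
end

section
/- Let Φ be an H-orbit of characters of A, let u := Σ_{χ∈Φ} χ ∈ ℂ[A], and let P := (1/|H|) Σ_{h∈H} ρ(h) be the averaging operator on ℂ[A], where ρ denotes the G-action. Then for every a ∈ A, (P ∘ ρ(a) ∘ P)(u) = ((1/|Φ|) Σ_{χ∈Φ} χ(a)) · u; that is, u is an eigenvector of P∘ρ(a)∘P with eigenvalue (1/|Φ|) Σ_{χ∈Φ} χ(a). -/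
noncomputable section

variable {A : Type*} [CommGroup A] [Fintype A]

/-- The averaging operator `P = (1/|H|) Σ_{h∈H} ρ(h)` on `ℂ[A]`. -/
def Pav (H : Subgroup (MulAut A)) [Fintype H] : (A → ℂ) →ₗ[ℂ] (A → ℂ) :=
  (Fintype.card H : ℂ)⁻¹ • ∑ h : H, rho H (SemidirectProduct.inr h)

/-! Auxiliary -/

def mact (h : MulAut A) (χ : A →* ℂ) : A →* ℂ := χ.comp (h⁻¹ : MulAut A).toMonoidHom

lemma mact_apply (h : MulAut A) (χ : A →* ℂ) (x : A) : mact h χ x = χ (h⁻¹ x) := rfl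

lemma mact_mul (g h : MulAut A) (χ : A →* ℂ) : mact (g * h) χ = mact g (mact h χ) := by
  ext x; simp [mact_apply, mul_inv_rev]

lemma mact_inv_mact (h : MulAut A) (χ : A →* ℂ) : mact h⁻¹ (mact h χ) = χ := by
  ext x; simp [mact_apply]

lemma mact_mact_inv (h : MulAut A) (χ : A →* ℂ) : mact h (mact h⁻¹ χ) = χ := by
  ext x; simp [mact_apply]

section Th
variable (H : Subgroup (MulAut A)) [Fintype H] (Φ : Finset (A →* ℂ)) (χ₀ : A →* ℂ)
  (hΦ : (↑Φ : Set (A →* ℂ)) = {ψ | ∃ h ∈ H, ∀ x : A, ψ x = χ₀ (h⁻¹ x)})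
include hΦ

lemma memΦ_iff (χ : A →* ℂ) : χ ∈ Φ ↔ ∃ h : H, χ = mact (↑h) χ₀ := by
  rw [← Finset.mem_coe, hΦ]
  constructor
  · rintro ⟨h, hh, he⟩
    exact ⟨⟨h, hh⟩, MonoidHom.ext fun x => he x⟩
  · rintro ⟨h, rfl⟩
    exact ⟨↑h, h.2, fun x => rfl⟩

lemma mact_memΦ {χ : A →* ℂ} (hχ : χ ∈ Φ) (h : H) : mact (↑h) χ ∈ Φ := by
  rw [memΦ_iff H Φ χ₀ hΦ] at hχ ⊢
  obtain ⟨k, rfl⟩ := hχ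
  exact ⟨h * k, by rw [Subgroup.coe_mul, mact_mul]⟩

lemma sum_mact_Φ (h : H) :
    ∑ χ ∈ Φ, charFun (mact (↑h) χ) = ∑ χ ∈ Φ, charFun χ := by
  refine Finset.sum_nbij' (i := fun χ => mact (↑h) χ) (j := fun χ => mact ((↑h)⁻¹) χ)
    (fun χ hχ => mact_memΦ H Φ χ₀ hΦ hχ h) (fun χ hχ => ?_) (fun χ _ => mact_inv_mact _ _)
    (fun χ _ => mact_mact_inv _ _) (fun χ _ => rfl)
  simpa using mact_memΦ H Φ χ₀ hΦ hχ h⁻¹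

lemma sum_over_H {χ : A →* ℂ} (hχ : χ ∈ Φ) :
    ∑ h : H, charFun (mact (↑h) χ) = ∑ h : H, charFun (mact (↑h) χ₀) := by
  obtain ⟨h₀, rfl⟩ := (memΦ_iff H Φ χ₀ hΦ χ).mp hχ
  refine Fintype.sum_equiv (Equiv.mulRight h₀) _ _ fun h => ?_
  simp [Equiv.coe_mulRight, Subgroup.coe_mul, mact_mul]

lemma card_smul_S :
    (Φ.card : ℂ) • (∑ h : H, charFun (mact (↑h) χ₀)) =
      (Fintype.card H : ℂ) • (∑ χ ∈ Φ, charFun χ) := by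
  have h1 : ∑ χ ∈ Φ, ∑ h : H, charFun (mact (↑h) χ)
      = (Φ.card : ℂ) • (∑ h : H, charFun (mact (↑h) χ₀)) := by
    rw [Finset.sum_congr rfl fun χ hχ => sum_over_H H Φ χ₀ hΦ hχ, Finset.sum_const,
      ← Nat.cast_smul_eq_nsmul ℂ]
  have h2 : ∑ χ ∈ Φ, ∑ h : H, charFun (mact (↑h) χ)
      = (Fintype.card H : ℂ) • (∑ χ ∈ Φ, charFun χ) := by
    rw [Finset.sum_comm, Finset.sum_congr rfl fun h _ => sum_mact_Φ H Φ χ₀ hΦ h,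
      Finset.sum_const, ← Nat.cast_smul_eq_nsmul ℂ, Finset.card_univ]
  rw [← h1, h2]

end Th

section Main
variable (H : Subgroup (MulAut A)) [Fintype H] (Φ : Finset (A →* ℂ)) (χ₀ : A →* ℂ)
  (hΦ : (↑Φ : Set (A →* ℂ)) = {ψ | ∃ h ∈ H, ∀ x : A, ψ x = χ₀ (h⁻¹ x)})
include hΦ

lemma cardH_ne : (Fintype.card H : ℂ) ≠ 0 := by
  exact_mod_cast Fintype.card_ne_zero

lemma cardΦ_ne : (Φ.card : ℂ) ≠ 0 := by
  have : χ₀ ∈ Φ := (memΦ_iff H Φ χ₀ hΦ χ₀).mpr ⟨1, by ext x; simp [mact_apply]⟩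
  exact_mod_cast Finset.card_ne_zero_of_mem this

lemma rho_inr_char (h : H) (χ : A →* ℂ) :
    rho H (SemidirectProduct.inr h) (charFun χ) = charFun (mact (↑h) χ) := by
  funext x
  simp [rho, charFun, mact_apply]

lemma Pav_char {χ : A →* ℂ} (hχ : χ ∈ Φ) :
    Pav H (charFun χ) = (Φ.card : ℂ)⁻¹ • ∑ ψ ∈ Φ, charFun ψ := by
  have : Pav H (charFun χ)
      = (Fintype.card H : ℂ)⁻¹ • ∑ h : H, charFun (mact (↑h) χ) := by
    simp only [Pav, LinearMap.smul_apply, LinearMap.coe_sum, Finset.sum_apply]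
    rw [Finset.sum_congr rfl fun h _ => rho_inr_char H Φ χ₀ hΦ h χ]
  rw [this, sum_over_H H Φ χ₀ hΦ hχ]
  have key := card_smul_S H Φ χ₀ hΦ
  have hΦc := cardΦ_ne H Φ χ₀ hΦ
  have hHc := cardH_ne H Φ χ₀ hΦ
  have : (∑ h : H, charFun (mact (↑h) χ₀))
      = ((Φ.card : ℂ)⁻¹ * (Fintype.card H : ℂ)) • ∑ ψ ∈ Φ, charFun ψ := by
    rw [mul_smul, ← key, ← mul_smul, inv_mul_cancel₀ hΦc, one_smul]
  rw [this, ← mul_smul]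
  congr 1
  field_simp

lemma Pav_u : Pav H (∑ χ ∈ Φ, charFun χ) = ∑ χ ∈ Φ, charFun χ := by
  rw [map_sum, Finset.sum_congr rfl fun χ hχ => Pav_char H Φ χ₀ hΦ hχ, Finset.sum_const,
    ← Nat.cast_smul_eq_nsmul ℂ, ← mul_smul, mul_inv_cancel₀ (cardΦ_ne H Φ χ₀ hΦ), one_smul]

lemma rho_inl_char (a : A) (χ : A →* ℂ) :
    rho H (SemidirectProduct.inl a) (charFun χ) = χ a • charFun χ := by
  funext x
  simp [rho, charFun, mul_comm]

theorem statement_2' (a : A) :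
    Pav H (rho H (SemidirectProduct.inl a) (Pav H (∑ χ ∈ Φ, charFun χ))) =
      ((Φ.card : ℂ)⁻¹ * ∑ χ ∈ Φ, χ a) • (∑ χ ∈ Φ, charFun χ) := by
  rw [Pav_u H Φ χ₀ hΦ, map_sum,
    Finset.sum_congr rfl fun χ _ => rho_inl_char H Φ χ₀ hΦ a χ, map_sum]
  rw [Finset.sum_congr rfl fun χ hχ => by
    rw [map_smul, Pav_char H Φ χ₀ hΦ hχ]]
  rw [Finset.sum_congr rfl fun χ _ => smul_smul (χ a) ((Φ.card : ℂ)⁻¹) _,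
    ← Finset.sum_smul, ← Finset.sum_mul, mul_comm]

end Main

/-- Let `Φ` be an `H`-orbit of characters of `A`, `u := Σ_{χ∈Φ} χ ∈ ℂ[A]`, and
`P := (1/|H|) Σ_{h∈H} ρ(h)` the averaging operator. Then for every `a ∈ A`,
`(P ∘ ρ(a) ∘ P)(u) = ((1/|Φ|) Σ_{χ∈Φ} χ(a)) · u`. -/
theorem statement_2 (H : Subgroup (MulAut A)) [Fintype H]
    (Φ : Finset (A →* ℂ)) (χ₀ : A →* ℂ)
    (hΦ : (↑Φ : Set (A →* ℂ)) =
      {ψ | ∃ h ∈ H, ∀ x : A, ψ x = χ₀ (h⁻¹ x)})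
    (a : A) :
    Pav H (rho H (SemidirectProduct.inl a) (Pav H (∑ χ ∈ Φ, charFun χ))) =
      ((Φ.card : ℂ)⁻¹ * ∑ χ ∈ Φ, χ a) • (∑ χ ∈ Φ, charFun χ) := statement_2' H Φ χ₀ hΦ a
end
end

section
/- Let Φ be an H-orbit of characters of A such that M := span(Φ) ⊆ ℂ[A] is an irreducible G-subrepresentation, and set S := {(1/|Φ|) Σ_{χ∈Φ} χ(a) : a ∈ A} ⊆ ℂ. Regard ℂ[G] as a left G-representation and identify its elements with functions G → ℂ. Let W be the M-isotypic component of ℂ[G] (the sum of all subrepresentations isomorphic to M), and let W^H := {f ∈ W : f(h·x) = f(x) for all h ∈ H, x ∈ G}. Then W^H has a ℂ-basis consisting of functions all of whose values lie in S. -/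
noncomputable section

open SemidirectProduct

variable {A : Type*} [CommGroup A] [Fintype A]

/-- The left-regular `G`-action on `ℂ[G]`, identified with functions `G → ℂ`:
`(g·F)(x) = F(g⁻¹x)`. -/
def lreg (H : Subgroup (MulAut A)) (g : Gsd H) : (Gsd H → ℂ) →ₗ[ℂ] (Gsd H → ℂ) where
  toFun F := fun x => F (g⁻¹ * x)
  map_add' _ _ := rfl
  map_smul' _ _ := rfl

/-- `U` is a `G`-subrepresentation of `ℂ[G]` (for the left-regular action). -/
def IsSubrepG (H : Subgroup (MulAut A)) (U : Submodule ℂ (Gsd H → ℂ)) : Prop :=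
  ∀ (g : Gsd H) (F : Gsd H → ℂ), F ∈ U → lreg H g F ∈ U

/-- `U ⊆ ℂ[G]` is isomorphic, as a `G`-representation, to the subrepresentation
`M ⊆ ℂ[A]`: there is an injective `ℂ`-linear `G`-equivariant map from `M` onto `U`. -/
def IsoToSub (H : Subgroup (MulAut A)) (M : Submodule ℂ (A → ℂ))
    (U : Submodule ℂ (Gsd H → ℂ)) : Prop :=
  ∃ T : ↥M →ₗ[ℂ] (Gsd H → ℂ),
    Function.Injective T ∧ LinearMap.range T = U ∧
    ∀ (g : Gsd H) (m m' : ↥M),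
      (m' : A → ℂ) = rho H g (m : A → ℂ) → T m' = lreg H g (T m)

/-- The `M`-isotypic component of `ℂ[G]`: the sum of all subrepresentations of `ℂ[G]`
isomorphic to `M`. -/
def isotypic (H : Subgroup (MulAut A)) (M : Submodule ℂ (A → ℂ)) :
    Submodule ℂ (Gsd H → ℂ) :=
  sSup {U | IsSubrepG H U ∧ IsoToSub H M U}

/-- `W^H = {f ∈ W : f(h·x) = f(x) for all h ∈ H, x ∈ G}`, for `W` the `M`-isotypic component
of `ℂ[G]`. -/
def isotypicHFixed (H : Subgroup (MulAut A)) (M : Submodule ℂ (A → ℂ)) :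
    Submodule ℂ (Gsd H → ℂ) where
  carrier := {F | F ∈ isotypic H M ∧ ∀ (h : H) (x : Gsd H), F (inr h * x) = F x}
  add_mem' := by
    rintro f g ⟨hf1, hf2⟩ ⟨hg1, hg2⟩
    exact ⟨add_mem hf1 hg1, fun h x => by
      simp only [Pi.add_apply, hf2 h x, hg2 h x]⟩
  zero_mem' := ⟨zero_mem _, fun _ _ => rfl⟩
  smul_mem' := by
    rintro c f ⟨hf1, hf2⟩
    exact ⟨Submodule.smul_mem _ c hf1, fun h x => by
      simp only [Pi.smul_apply, hf2 h x]⟩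

/-!
For `b ∈ A`, pulling functions back along `x ↦ (x.left * x.right b)⁻¹` is a `G`-equivariant
embedding `ℂ[A] → ℂ[G]`; so the pullbacks `e_b` of the orbit average `σ = |Φ|⁻¹ ∑_{χ ∈ Φ} χ` lie
in `W`, and they are left `H`-invariant because `σ` is `H`-invariant. Their values are values of
`σ`, i.e. lie in `S`.

Conversely, a copy of `M` inside `ℂ[G]` is spanned by images of the characters `χ ∈ Φ`, which are
eigenvectors of left translation by `A`; hence `a ↦ F (a⁻¹)` lies in `M` for every `F ∈ W`. An
`H`-invariant `F` is determined by this restriction, so `W^H` is the image of `M` under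
`f ↦ (x ↦ f (x⁻¹).left)`. By orthogonality of characters the translates of `σ` span `M`, and their
images are exactly the `e_b`. Any linearly independent subfamily of the `e_b` spanning the same
space is the required basis.
-/

open Submodule LinearMap

theorem exists_finset_linearIndependent_span_eq {K V : Type*} [DivisionRing K] [AddCommGroup V]
    [Module K V] {s : Set V} (hs : s.Finite) :
    ∃ B : Finset V, ↑B ⊆ s ∧ LinearIndependent K (fun v : (↑B : Set V) => (v : V)) ∧
      span K (↑B : Set V) = span K s := by
  obtain ⟨t, hts, hspan, hli⟩ := exists_linearIndependent K s
  have ht : t.Finite := hs.subset hts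
  refine ⟨ht.toFinset, ?_, ?_, ?_⟩ <;> rw [ht.coe_toFinset]
  exacts [hts, hli, hspan]

section

variable {A : Type*} [CommGroup A]

open Classical in
theorem sum_apply_mul_apply_inv [Fintype A] (χ ψ : A →* ℂ) :
    ∑ b : A, χ b * ψ b⁻¹ = if χ = ψ then (Fintype.card A : ℂ) else 0 := by
  have htriv : χ * ψ.comp invMonoidHom = 1 ↔ χ = ψ := by
    refine ⟨fun h => MonoidHom.ext fun b => ?_, fun h => MonoidHom.ext fun b => ?_⟩
    · have hb : χ b * ψ b⁻¹ = 1 := DFunLike.congr_fun h b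
      rw [← mul_one (ψ b), ← hb, ← mul_assoc, mul_comm (ψ b), mul_assoc, ← map_mul,
        mul_inv_cancel, map_one, mul_one]
    · change χ b * ψ b⁻¹ = 1
      rw [h, ← map_mul, mul_inv_cancel, map_one]
  simpa [htriv] using sum_hom_units (χ * ψ.comp invMonoidHom)

def charAverage (Φ : Finset (A →* ℂ)) (a : A) : ℂ := (Φ.card : ℂ)⁻¹ * ∑ χ ∈ Φ, χ a

theorem charAverage_mem_span (Φ : Finset (A →* ℂ)) :
    charAverage Φ ∈ span ℂ (charFun '' ↑Φ) := by
  have : charAverage Φ = (Φ.card : ℂ)⁻¹ • ∑ χ ∈ Φ, charFun χ := by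
    funext a; simp [charAverage, charFun]
  rw [this]
  exact smul_mem _ _ (sum_mem fun χ hχ => subset_span ⟨χ, hχ, rfl⟩)

theorem sum_smul_charAverage_mul_inv [Fintype A] {Φ : Finset (A →* ℂ)} {χ : A →* ℂ}
    (hχ : χ ∈ Φ) :
    ∑ b : A, χ b • (fun a => charAverage Φ (a * b⁻¹)) =
      ((Fintype.card A : ℂ) * (Φ.card : ℂ)⁻¹) • charFun χ := by
  classical
  funext a
  simp only [Finset.sum_apply, Pi.smul_apply, smul_eq_mul]
  calc ∑ b : A, χ b * charAverage Φ (a * b⁻¹)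
      = (Φ.card : ℂ)⁻¹ * ∑ ψ ∈ Φ, ψ a * ∑ b : A, χ b * ψ b⁻¹ := by
        simp only [charAverage, map_mul, Finset.mul_sum]
        rw [Finset.sum_comm]
        exact Finset.sum_congr rfl fun _ _ => Finset.sum_congr rfl fun _ _ => by ring
    _ = (Φ.card : ℂ)⁻¹ * (χ a * Fintype.card A) := by
        simp only [sum_apply_mul_apply_inv, mul_ite, mul_zero, eq_comm (a := χ),
          Finset.sum_ite_eq', if_pos hχ]
    _ = _ := by simp only [charFun]; ring

theorem span_range_charAverage_mul_inv [Fintype A] (Φ : Finset (A →* ℂ)) :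
    span ℂ (Set.range fun b a => charAverage Φ (a * b⁻¹)) = span ℂ (charFun '' ↑Φ) := by
  refine le_antisymm (span_le.2 ?_) (span_le.2 ?_)
  · rintro _ ⟨b, rfl⟩
    have : (fun a => charAverage Φ (a * b⁻¹)) =
        (Φ.card : ℂ)⁻¹ • ∑ χ ∈ Φ, χ b⁻¹ • charFun χ := by
      funext a; simp [charAverage, charFun, Finset.mul_sum, mul_comm]
    simp only [SetLike.mem_coe, this]
    exact smul_mem _ _ (sum_mem fun χ hχ => smul_mem _ _ (subset_span ⟨χ, hχ, rfl⟩))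
  · rintro _ ⟨χ, hχ, rfl⟩
    have hA : (Fintype.card A : ℂ) ≠ 0 := Nat.cast_ne_zero.2 Fintype.card_ne_zero
    have hΦ : (Φ.card : ℂ) ≠ 0 := Nat.cast_ne_zero.2 (Finset.card_ne_zero_of_mem hχ)
    have : charFun χ = ((Φ.card : ℂ) * (Fintype.card A : ℂ)⁻¹) •
        ∑ b : A, χ b • (fun a => charAverage Φ (a * b⁻¹)) := by
      rw [sum_smul_charAverage_mul_inv hχ, smul_smul]
      field_simp
      rw [one_smul]
    rw [SetLike.mem_coe, this]
    exact smul_mem _ _ (sum_mem fun b _ => smul_mem _ _ (subset_span ⟨b, rfl⟩))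

variable (H : Subgroup (MulAut A))

/-- `x.left * x.right b` is the image of `b` under the affine action of `x ∈ A ⋊ H` on `A`. -/
def affinePullback (b : A) : (A → ℂ) →ₗ[ℂ] (Gsd H → ℂ) :=
  funLeft ℂ ℂ fun x => (x.left * (x.right : MulAut A) b)⁻¹

def invLeftPullback : (A → ℂ) →ₗ[ℂ] (Gsd H → ℂ) :=
  funLeft ℂ ℂ fun x => x⁻¹.left

def inlInvRestrict : (Gsd H → ℂ) →ₗ[ℂ] (A → ℂ) :=
  funLeft ℂ ℂ fun a => inl a⁻¹

variable {H}

theorem affinePullback_rho (b : A) (g : Gsd H) (f : A → ℂ) :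
    affinePullback H b (rho H g f) = lreg H g (affinePullback H b f) := by
  funext x
  simp only [affinePullback, funLeft_apply, rho, lreg, LinearMap.coe_mk, AddHom.coe_mk]
  congr 1
  simp only [mul_left, mul_right, inv_left, inv_right, Subgroup.coe_mul, Subgroup.coe_inv,
    Subgroup.subtype_apply, MulAut.mul_apply, map_mul, map_inv]
  simp only [mul_inv, inv_inv, mul_comm, mul_left_comm]

theorem affinePullback_injective (b : A) : Function.Injective (affinePullback H b) :=
  funLeft_injective_of_surjective _ _ _ fun a => ⟨inl (a⁻¹ * b⁻¹), by simp⟩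

theorem map_affinePullback_le_isotypic {M : Submodule ℂ (A → ℂ)} (hM : IsSubrep H M) (b : A) :
    M.map (affinePullback H b) ≤ isotypic H M := by
  refine le_sSup ⟨?_, affinePullback H b ∘ₗ M.subtype, ?_, ?_, ?_⟩
  · rintro g _ ⟨f, hf, rfl⟩
    exact ⟨rho H g f, hM g f hf, affinePullback_rho b g f⟩
  · exact (affinePullback_injective b).comp Subtype.val_injective
  · rw [range_comp, range_subtype]
  · intro g m m' h
    simp [h, affinePullback_rho]

theorem apply_inl_inv_eq_of_equivariant {M : Submodule ℂ (A → ℂ)} {T : M →ₗ[ℂ] (Gsd H → ℂ)}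
    (hT : ∀ (g : Gsd H) (m m' : M), (m' : A → ℂ) = rho H g (m : A → ℂ) → T m' = lreg H g (T m))
    {χ : A →* ℂ} {m : M} (hm : (m : A → ℂ) = charFun χ) (a : A) :
    T m (inl a⁻¹) = χ a * T m 1 := by
  have hrho : ((χ a • m : M) : A → ℂ) = rho H (inl a) m := by
    funext x
    simp [hm, rho, charFun, mul_comm]
  have := congr_fun (hT (inl a) m (χ a • m) hrho) 1
  simpa [lreg] using this.symm

theorem isotypic_le_comap_inlInvRestrict {s : Set (A →* ℂ)} {M : Submodule ℂ (A → ℂ)}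
    (hMdef : M = span ℂ (charFun '' s)) :
    isotypic H M ≤ M.comap (inlInvRestrict H) := by
  refine sSup_le ?_
  rintro U ⟨-, T, -, rfl, hT⟩ _ ⟨m, rfl⟩
  suffices ⊤ ≤ (M.comap (inlInvRestrict H)).comap T from this trivial
  subst hMdef
  rw [← span_span_coe_preimage, span_le]
  rintro m ⟨χ, hχ, hm⟩
  have : inlInvRestrict H (T m) = T m 1 • charFun χ := by
    funext a
    simp only [inlInvRestrict, funLeft_apply, Pi.smul_apply, smul_eq_mul]
    rw [apply_inl_inv_eq_of_equivariant hT hm.symm, charFun, mul_comm]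
  simp only [SetLike.mem_coe, mem_comap, this]
  exact smul_mem _ _ (subset_span ⟨χ, hχ, rfl⟩)

theorem invLeftPullback_apply_inr_mul (f : A → ℂ) (h : H) (x : Gsd H) :
    invLeftPullback H f (inr h * x) = invLeftPullback H f x := by
  simp only [invLeftPullback, funLeft_apply, mul_inv_rev, ← map_inv, mul_left, left_inr,
    map_one, mul_one]

theorem eq_invLeftPullback_of_forall_inr_mul {F : Gsd H → ℂ}
    (hF : ∀ (h : H) (x : Gsd H), F (inr h * x) = F x) :
    F = invLeftPullback H (inlInvRestrict H F) := by
  funext x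
  rw [← hF x.right⁻¹ x]
  simp only [invLeftPullback, inlInvRestrict, funLeft_apply]
  congr 1
  ext <;> simp

theorem comp_mem_of_eq_orbit {s : Set (A →* ℂ)} {χ₀ : A →* ℂ}
    (hs : s = {ψ | ∃ h ∈ H, ∀ x : A, ψ x = χ₀ (h⁻¹ x)}) {χ : A →* ℂ} (hχ : χ ∈ s)
    {σ : MulAut A} (hσ : σ ∈ H) : χ.comp σ.toMonoidHom ∈ s := by
  rw [hs] at hχ ⊢
  obtain ⟨h, hh, hχ⟩ := hχ
  exact ⟨σ⁻¹ * h, mul_mem (inv_mem hσ) hh, fun x => by simpa using hχ (σ x)⟩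

theorem charAverage_apply_of_eq_orbit {Φ : Finset (A →* ℂ)} {χ₀ : A →* ℂ}
    (hΦ : (↑Φ : Set (A →* ℂ)) = {ψ | ∃ h ∈ H, ∀ x : A, ψ x = χ₀ (h⁻¹ x)})
    {σ : MulAut A} (hσ : σ ∈ H) (a : A) : charAverage Φ (σ a) = charAverage Φ a := by
  unfold charAverage
  congr 1
  exact Finset.sum_nbij' (fun χ => χ.comp σ.toMonoidHom) (fun χ => χ.comp σ⁻¹.toMonoidHom)
    (fun χ hχ => comp_mem_of_eq_orbit hΦ hχ hσ)
    (fun χ hχ => comp_mem_of_eq_orbit hΦ hχ (inv_mem hσ))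
    (fun χ _ => by ext; simp) (fun χ _ => by ext; simp) (fun _ _ => rfl)

theorem affinePullback_charAverage {Φ : Finset (A →* ℂ)} {χ₀ : A →* ℂ}
    (hΦ : (↑Φ : Set (A →* ℂ)) = {ψ | ∃ h ∈ H, ∀ x : A, ψ x = χ₀ (h⁻¹ x)}) (b : A) :
    affinePullback H b (charAverage Φ) = invLeftPullback H fun a => charAverage Φ (a * b⁻¹) := by
  funext x
  have hx : x⁻¹.left * b⁻¹ = (x.right : MulAut A)⁻¹ (x.left * (x.right : MulAut A) b)⁻¹ := by
    simp [mul_comm]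
  simp only [affinePullback, invLeftPullback, funLeft_apply, hx]
  exact (charAverage_apply_of_eq_orbit hΦ (inv_mem x.right.2) _).symm

theorem isotypicHFixed_eq_span_affinePullback [Fintype A] {Φ : Finset (A →* ℂ)} {χ₀ : A →* ℂ}
    (hΦ : (↑Φ : Set (A →* ℂ)) = {ψ | ∃ h ∈ H, ∀ x : A, ψ x = χ₀ (h⁻¹ x)})
    {M : Submodule ℂ (A → ℂ)} (hMdef : M = span ℂ (charFun '' ↑Φ)) (hM : IsSubrep H M) :
    isotypicHFixed H M = span ℂ (Set.range fun b => affinePullback H b (charAverage Φ)) := by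
  have hmap : M.map (invLeftPullback H) =
      span ℂ (Set.range fun b => affinePullback H b (charAverage Φ)) := by
    rw [hMdef, ← span_range_charAverage_mul_inv, Submodule.map_span, ← Set.range_comp]
    simp only [Function.comp_def, affinePullback_charAverage hΦ]
  rw [← hmap]
  refine le_antisymm ?_ ?_
  · rintro F ⟨hFW, hFinv⟩
    rw [eq_invLeftPullback_of_forall_inr_mul hFinv]
    exact mem_map_of_mem (isotypic_le_comap_inlInvRestrict hMdef hFW)
  · rw [hmap, span_le]
    rintro _ ⟨b, rfl⟩
    refine ⟨map_affinePullback_le_isotypic hM b (mem_map_of_mem ?_), fun h x => ?_⟩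
    · exact hMdef ▸ charAverage_mem_span Φ
    · beta_reduce
      rw [affinePullback_charAverage hΦ]
      exact invLeftPullback_apply_inr_mul _ h x

end

theorem statement_6_general (H : Subgroup (MulAut A)) (Φ : Finset (A →* ℂ)) (χ₀ : A →* ℂ)
    (hΦ : (↑Φ : Set (A →* ℂ)) = {ψ | ∃ h ∈ H, ∀ x : A, ψ x = χ₀ (h⁻¹ x)})
    (M : Submodule ℂ (A → ℂ)) (hMdef : M = Submodule.span ℂ (charFun '' ↑Φ))
    (hM : IsSubrep H M) :
    ∃ B : Finset (Gsd H → ℂ),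
      (∀ F ∈ B, ∀ x : Gsd H,
        F x ∈ Set.range (fun a : A => (Φ.card : ℂ)⁻¹ * ∑ χ ∈ Φ, χ a)) ∧
      LinearIndependent ℂ (fun f : ↥(↑B : Set (Gsd H → ℂ)) => (f : Gsd H → ℂ)) ∧
      Submodule.span ℂ (↑B : Set (Gsd H → ℂ)) = isotypicHFixed H M := by
  obtain ⟨B, hB, hli, hspan⟩ := exists_finset_linearIndependent_span_eq (K := ℂ)
    (Set.finite_range fun b => affinePullback H b (charAverage Φ))
  refine ⟨B, fun F hF x => ?_, hli, ?_⟩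
  · obtain ⟨b, rfl⟩ := hB hF
    exact ⟨_, rfl⟩
  · rw [hspan, isotypicHFixed_eq_span_affinePullback hΦ hMdef hM]

/-- Let `Φ` be an `H`-orbit of characters of `A` such that `M = span(Φ)` is an
irreducible `G`-subrepresentation of `ℂ[A]`, and let
`S = {(1/|Φ|) Σ_{χ∈Φ} χ(a) : a ∈ A} ⊆ ℂ`.  Then the space `W^H` of `H`-invariant vectors of
the `M`-isotypic component `W` of `ℂ[G]` has a `ℂ`-basis consisting of functions `G → ℂ` all
of whose values lie in `S`. -/
theorem statement_6 (H : Subgroup (MulAut A)) (Φ : Finset (A →* ℂ)) (χ₀ : A →* ℂ)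
    (hΦ : (↑Φ : Set (A →* ℂ)) = {ψ | ∃ h ∈ H, ∀ x : A, ψ x = χ₀ (h⁻¹ x)})
    (M : Submodule ℂ (A → ℂ)) (hMdef : M = Submodule.span ℂ (charFun '' ↑Φ))
    (hM : IsSubrep H M) (hMirr : IsIrred H M) :
    ∃ B : Finset (Gsd H → ℂ),
      (∀ F ∈ B, ∀ x : Gsd H,
        F x ∈ Set.range (fun a : A => (Φ.card : ℂ)⁻¹ * ∑ χ ∈ Φ, χ a)) ∧
      LinearIndependent ℂ (fun f : ↥(↑B : Set (Gsd H → ℂ)) => (f : Gsd H → ℂ)) ∧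
      Submodule.span ℂ (↑B : Set (Gsd H → ℂ)) = isotypicHFixed H M :=
  statement_6_general H Φ χ₀ hΦ M hMdef hM
end
end

section
/- Let L be a positive integer and let a, b be integers with gcd(a,b) = 1. Let B: (ZMod L)² → (ZMod L)² be the ZMod L-linear map (x,y) ↦ (ax + by, bx + ay). Then the kernel of B has exactly gcd(a² − b², L) elements. -/
/-- The number of `m`-torsion points of `ZMod L` is `gcd m L`. -/
lemma card_torsion_zmod (L : ℕ) (hL : 0 < L) (m : ℕ) :
    Nat.card {z : ZMod L // (m : ZMod L) * z = 0} = Nat.gcd m L := by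
  haveI : NeZero L := ⟨hL.ne'⟩
  set g := Nat.gcd m L with hg
  have hgL : g ∣ L := Nat.gcd_dvd_right m L
  have hgm : g ∣ m := Nat.gcd_dvd_left m L
  have hgpos : 0 < g := Nat.gcd_pos_of_pos_right m hL
  set t := L / g with ht
  have htg : t * g = L := Nat.div_mul_cancel hgL
  have htpos : 0 < t := by
    rcases Nat.eq_zero_or_pos t with h | h
    · rw [h, zero_mul] at htg; omega
    · exact h
  have hm : g * (m / g) = m := Nat.mul_div_cancel' hgm
  -- the membership condition is equivalent to `t ∣ z.val`
  have key : ∀ z : ZMod L, (m : ZMod L) * z = 0 ↔ t ∣ z.val := by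
    intro z
    have hz : ((z.val : ℕ) : ZMod L) = z := ZMod.natCast_rightInverse z
    constructor
    · intro h
      rw [← hz, ← Nat.cast_mul, ZMod.natCast_eq_zero_iff] at h
      obtain ⟨k, hk⟩ := h
      have h2 : (m / g) * z.val = t * k := by
        apply Nat.eq_of_mul_eq_mul_left hgpos
        calc g * (m / g * z.val) = (g * (m / g)) * z.val := by ring
          _ = m * z.val := by rw [hm]
          _ = L * k := hk
          _ = (t * g) * k := by rw [htg]
          _ = g * (t * k) := by ring
      have hcop : Nat.Coprime t (m / g) :=
        (Nat.coprime_div_gcd_div_gcd (m := m) (n := L) hgpos).symm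
      exact hcop.dvd_of_dvd_mul_left ⟨k, h2⟩
    · rintro ⟨k, hk⟩
      rw [← hz, ← Nat.cast_mul, ZMod.natCast_eq_zero_iff]
      refine ⟨(m / g) * k, ?_⟩
      rw [hk]
      calc m * (t * k) = (g * (m / g)) * (t * k) := by rw [hm]
        _ = (t * g) * ((m / g) * k) := by ring
        _ = L * ((m / g) * k) := by rw [htg]
  have hlt : ∀ k : ℕ, k < g → t * k < L := by
    intro k hk
    calc t * k < t * g := (mul_lt_mul_iff_right₀ htpos).mpr hk
      _ = L := htg
  -- build an equivalence with `Fin g`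
  refine Nat.card_eq_of_equiv_fin ?_
  refine ⟨fun z => ⟨z.1.val / t, ?_⟩, fun k => ⟨((t * k.1 : ℕ) : ZMod L), ?_⟩, ?_, ?_⟩
  · rw [Nat.div_lt_iff_lt_mul htpos, mul_comm g t, htg]
    exact ZMod.val_lt z.1
  · rw [key, ZMod.val_natCast_of_lt (hlt k.1 k.2)]
    exact dvd_mul_right t k.1
  · rintro ⟨z, hzmem⟩
    have hdvd : t ∣ z.val := (key z).mp hzmem
    apply Subtype.ext
    simp only
    rw [Nat.mul_div_cancel' hdvd]
    exact ZMod.natCast_rightInverse z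
  · rintro ⟨k, hk⟩
    apply Fin.ext
    simp only
    rw [ZMod.val_natCast_of_lt (hlt k hk)]
    exact Nat.mul_div_cancel_left k htpos

/-- For `L` a positive integer and coprime integers `a, b`, the kernel of the
`ZMod L`-linear map `B : (ZMod L)² → (ZMod L)²`, `(x,y) ↦ (ax + by, bx + ay)`, has exactly
`gcd(a² − b², L)` elements. -/
theorem statement_9 (L : ℕ) (hL : 0 < L) (a b : ℤ) (hab : Int.gcd a b = 1) :
    Nat.card {p : ZMod L × ZMod L //
        (a : ZMod L) * p.1 + (b : ZMod L) * p.2 = 0 ∧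
        (b : ZMod L) * p.1 + (a : ZMod L) * p.2 = 0} =
      Int.gcd (a ^ 2 - b ^ 2) (L : ℤ) := by
  obtain ⟨u, v, huv⟩ := (Int.isCoprime_iff_gcd_eq_one.mpr hab)
  have hcast : (u : ZMod L) * a + (v : ZMod L) * b = 1 := by
    have := congrArg (Int.cast : ℤ → ZMod L) huv
    push_cast at this
    exact this
  have hD : ((a ^ 2 - b ^ 2 : ℤ) : ZMod L) = (a : ZMod L) ^ 2 - (b : ZMod L) ^ 2 := by
    push_cast; ring
  -- bijection between the kernel and the d-torsion of ZMod L
  have e : {p : ZMod L × ZMod L //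
        (a : ZMod L) * p.1 + (b : ZMod L) * p.2 = 0 ∧
        (b : ZMod L) * p.1 + (a : ZMod L) * p.2 = 0} ≃
      {z : ZMod L // ((a ^ 2 - b ^ 2 : ℤ) : ZMod L) * z = 0} := by
    refine ⟨fun p => ⟨p.1.2, ?_⟩,
          fun z => ⟨(-(((u : ZMod L) * b + (v : ZMod L) * a)) * z.1, z.1), ?_, ?_⟩, ?_, ?_⟩
    · obtain ⟨⟨x, y⟩, h1, h2⟩ := p
      simp only at h1 h2 ⊢
      rw [hD]
      linear_combination (a : ZMod L) * h2 - (b : ZMod L) * h1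
    · obtain ⟨z, hz⟩ := z
      rw [hD] at hz
      simp only
      linear_combination (-(v : ZMod L)) * hz - (b : ZMod L) * z * hcast
    · obtain ⟨z, hz⟩ := z
      rw [hD] at hz
      simp only
      linear_combination (u : ZMod L) * hz - (a : ZMod L) * z * hcast
    · rintro ⟨⟨x, y⟩, h1, h2⟩
      apply Subtype.ext
      simp only [Prod.mk.injEq]
      refine ⟨?_, trivial⟩
      linear_combination (-(u : ZMod L)) * h1 - (v : ZMod L) * h2 + x * hcast
    · rintro ⟨z, hz⟩
      rfl
  rw [Nat.card_congr e]
  -- reduce to natural number torsion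
  have hpm : (((a ^ 2 - b ^ 2 : ℤ).natAbs : ℕ) : ZMod L) = ((a ^ 2 - b ^ 2 : ℤ) : ZMod L) ∨
      (((a ^ 2 - b ^ 2 : ℤ).natAbs : ℕ) : ZMod L) = -((a ^ 2 - b ^ 2 : ℤ) : ZMod L) := by
    rcases Int.natAbs_eq (a ^ 2 - b ^ 2 : ℤ) with h | h
    · left
      conv_rhs => rw [h]
      exact (Int.cast_natCast _).symm
    · right
      conv_rhs => rw [h]
      rw [Int.cast_neg, Int.cast_natCast, neg_neg]
  have e2 : {z : ZMod L // ((a ^ 2 - b ^ 2 : ℤ) : ZMod L) * z = 0} ≃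
      {z : ZMod L // (((a ^ 2 - b ^ 2 : ℤ).natAbs : ℕ) : ZMod L) * z = 0} := by
    refine Equiv.subtypeEquivRight fun z => ?_
    rcases hpm with h | h
    · rw [h]
    · rw [h, neg_mul, neg_eq_zero]
  rw [Nat.card_congr e2, card_torsion_zmod L hL]
  simp [Int.gcd]
end

section
/- Let N be an integer with N > 4 and N ≠ 6, and let (m_k) for 1 ≤ k ≤ ⌊N/2⌋ be nonnegative real numbers such that m_k ≥ 4 whenever gcd(k, N) = 1. Then Σ_{k=1}^{⌊N/2⌋} m_k · cos²(2πk/N) > 2. -/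
open scoped BigOperators

lemma cos_sq_gt_half {x : ℝ} (h0 : 0 ≤ x) (h1 : x < Real.pi / 4) :
    1/2 < Real.cos x ^ 2 := by
  have h4 : Real.pi / 4 ≤ Real.pi := by linarith [Real.pi_pos]
  have hlt : Real.cos (Real.pi / 4) < Real.cos x :=
    Real.cos_lt_cos_of_nonneg_of_le_pi h0 h4 h1
  rw [Real.cos_pi_div_four] at hlt
  have hs : Real.sqrt 2 ^ 2 = 2 := Real.sq_sqrt (by norm_num)
  have hp : (0:ℝ) < Real.sqrt 2 := Real.sqrt_pos.mpr (by norm_num)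
  nlinarith

/-- For an integer `N > 4`, `N ≠ 6`, and nonnegative reals `m_k` (`1 ≤ k ≤ ⌊N/2⌋`)
with `m_k ≥ 4` whenever `gcd(k,N) = 1`, one has `Σ_{k=1}^{⌊N/2⌋} m_k cos²(2πk/N) > 2`. -/
theorem statement_14 (N : ℕ) (hN : 4 < N) (hN6 : N ≠ 6) (m : ℕ → ℝ)
    (hm0 : ∀ k, 1 ≤ k → k ≤ N / 2 → 0 ≤ m k)
    (hm4 : ∀ k, 1 ≤ k → k ≤ N / 2 → Nat.gcd k N = 1 → 4 ≤ m k) :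
    2 < ∑ k ∈ Finset.Icc 1 (N / 2), m k * Real.cos (2 * Real.pi * k / N) ^ 2 := by
  have key : ∀ k, 1 ≤ k → k ≤ N / 2 →
      2 < m k * Real.cos (2 * Real.pi * k / N) ^ 2 →
      2 < ∑ k ∈ Finset.Icc 1 (N / 2), m k * Real.cos (2 * Real.pi * k / N) ^ 2 := by
    intro k h1 h2 hlt
    refine lt_of_lt_of_le hlt (Finset.single_le_sum (f := fun k =>
        m k * Real.cos (2 * Real.pi * k / N) ^ 2) ?_ (Finset.mem_Icc.mpr ⟨h1, h2⟩))
    intro i hi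
    obtain ⟨hi1, hi2⟩ := Finset.mem_Icc.mp hi
    exact mul_nonneg (hm0 i hi1 hi2) (sq_nonneg _)
  rcases lt_or_ge N 9 with h9 | h9
  · interval_cases N
    · -- N = 5
      apply key 2 (by norm_num) (by norm_num)
      have hm : 4 ≤ m 2 := hm4 2 (by norm_num) (by norm_num) (by norm_num)
      have hang : (2 * Real.pi * (2:ℕ) / (5:ℕ) : ℝ) = Real.pi - Real.pi / 5 := by
        push_cast; ring
      rw [hang, Real.cos_pi_sub, neg_sq]
      have := cos_sq_gt_half (x := Real.pi / 5) (by positivity)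
        (by linarith [Real.pi_pos])
      nlinarith
    · -- N = 6
      exact absurd rfl hN6
    · -- N = 7
      apply key 3 (by norm_num) (by norm_num)
      have hm : 4 ≤ m 3 := hm4 3 (by norm_num) (by norm_num) (by norm_num)
      have hang : (2 * Real.pi * (3:ℕ) / (7:ℕ) : ℝ) = Real.pi - Real.pi / 7 := by
        push_cast; ring
      rw [hang, Real.cos_pi_sub, neg_sq]
      have := cos_sq_gt_half (x := Real.pi / 7) (by positivity)
        (by linarith [Real.pi_pos])
      nlinarith
    · -- N = 8
      have hIcc : Finset.Icc 1 (8/2) = ({1, 2, 3, 4} : Finset ℕ) := rfl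
      rw [hIcc]
      rw [Finset.sum_insert (by decide), Finset.sum_insert (by decide),
        Finset.sum_insert (by decide), Finset.sum_singleton]
      have h1 : (2 * Real.pi * (1:ℕ) / (8:ℕ) : ℝ) = Real.pi / 4 := by push_cast; ring
      have h2 : (2 * Real.pi * (2:ℕ) / (8:ℕ) : ℝ) = Real.pi / 2 := by push_cast; ring
      have h3 : (2 * Real.pi * (3:ℕ) / (8:ℕ) : ℝ) = Real.pi - Real.pi / 4 := by
        push_cast; ring
      have h4 : (2 * Real.pi * (4:ℕ) / (8:ℕ) : ℝ) = Real.pi := by push_cast; ring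
      rw [h1, h2, h3, h4, Real.cos_pi_sub, Real.cos_pi_div_two, Real.cos_pi,
        Real.cos_pi_div_four, neg_sq]
      have hs : Real.sqrt 2 ^ 2 = 2 := Real.sq_sqrt (by norm_num)
      have hm1 : 4 ≤ m 1 := hm4 1 (by norm_num) (by norm_num) (by norm_num)
      have hm3 : 4 ≤ m 3 := hm4 3 (by norm_num) (by norm_num) (by norm_num)
      have hm2 : 0 ≤ m 2 := hm0 2 (by norm_num) (by norm_num)
      have hm4' : 0 ≤ m 4 := hm0 4 (by norm_num) (by norm_num)
      nlinarith
  · -- N ≥ 9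
    apply key 1 le_rfl (by omega)
    have hm : 4 ≤ m 1 := hm4 1 le_rfl (by omega) (Nat.gcd_one_left N)
    have hN9 : (9:ℝ) ≤ N := by exact_mod_cast h9
    have hNpos : (0:ℝ) < N := by linarith
    have hcos : 1/2 < Real.cos (2 * Real.pi * (1:ℕ) / N) ^ 2 := by
      apply cos_sq_gt_half
      · positivity
      · rw [div_lt_div_iff₀ hNpos (by norm_num : (0:ℝ) < 4)]
        push_cast
        nlinarith [Real.pi_pos]
    nlinarith
end

section
/- Let N be an integer with N > 8 and N ≠ 10, and let (m_k) for 1 ≤ k ≤ ⌊N/2⌋ be nonnegative real numbers such that m_k ≥ 2 whenever gcd(k, N) = 1. Then Σ_{k=1}^{⌊N/2⌋} m_k · cos²(2πk/N) > 2. -/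
/-!
Two terms of the sum together already exceed `2`: the one at `k = 1` and the one at a unit `k` just
below `N / 2` (`k = (N - 1) / 2` for odd `N`, and the odd one of `N / 2 - 1`, `N / 2 - 2` for
even `N`). Since `cos² (2πk/N) = cos² (π - 2πk/N)`, it suffices that
`2π/N + (π - 2πk/N) < π/2`, and for `x, y ≥ 0` with `x + y < π/2` one has
`cos² x + cos² y > cos² x + sin² x = 1`.
-/

open Real

theorem Real.one_lt_cos_sq_add_cos_sq {x y : ℝ} (hx : 0 ≤ x) (hy : 0 ≤ y) (hxy : x + y < π / 2) :
    1 < cos x ^ 2 + cos y ^ 2 := by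
  have hsin : 0 ≤ sin x := sin_nonneg_of_nonneg_of_le_pi hx (by linarith [pi_pos])
  have hlt : sin x < cos y := by
    rw [← cos_pi_div_two_sub]
    exact cos_lt_cos_of_nonneg_of_le_pi_div_two hy (by linarith) (by linarith)
  nlinarith [sin_sq_add_cos_sq x]

theorem one_lt_cos_sq_two_pi_div_add_cos_sq {N k : ℕ} (hkN : 2 * k ≤ N) (hk : N + 4 < 4 * k) :
    1 < cos (2 * π / N) ^ 2 + cos (2 * π * k / N) ^ 2 := by
  have hN : (0 : ℝ) < N := by exact_mod_cast (by omega : 0 < N)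
  have hkN' : (2 * k : ℝ) ≤ N := by exact_mod_cast hkN
  have hk' : (N + 4 : ℝ) < 4 * k := by exact_mod_cast hk
  have hy : 0 ≤ π - 2 * π * k / N := by
    rw [sub_nonneg, div_le_iff₀ hN]
    nlinarith [pi_pos]
  have hxy : 2 * π / N + (π - 2 * π * k / N) < π / 2 := by
    have hsplit : 2 * π / N + (π - 2 * π * k / N) - π / 2 = π * (N + 4 - 4 * k) / (2 * N) := by
      field_simp
      ring
    have : π * (N + 4 - 4 * k) / (2 * N) < 0 :=
      div_neg_of_neg_of_pos (mul_neg_of_pos_of_neg pi_pos (by linarith)) (by positivity)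
    linarith
  have h := one_lt_cos_sq_add_cos_sq (by positivity) hy hxy
  rwa [cos_pi_sub, neg_sq] at h

theorem Nat.exists_coprime_two_le_and_four_mul_gt {N : ℕ} (hN : 8 < N) (hN10 : N ≠ 10) :
    ∃ k, k.Coprime N ∧ 2 ≤ k ∧ 2 * k ≤ N ∧ N + 4 < 4 * k := by
  rcases Nat.even_or_odd N with ⟨u, hu⟩ | ⟨t, ht⟩
  · rcases Nat.even_or_odd u with ⟨s, hs⟩ | ⟨s, hs⟩
    · have hodd : Odd (2 * s - 1) := ⟨s - 1, by omega⟩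
      refine ⟨2 * s - 1, ?_, by omega, by omega, by omega⟩
      rw [show N = (2 * s - 1) * 2 + 2 by omega, Nat.coprime_mul_left_add_right]
      exact hodd.coprime_two_right
    · have hodd : Odd (2 * s - 1) := ⟨s - 1, by omega⟩
      refine ⟨2 * s - 1, ?_, by omega, by omega, by omega⟩
      rw [show N = (2 * s - 1) * 2 + 2 ^ 2 by omega, Nat.coprime_mul_left_add_right]
      exact hodd.coprime_two_right.pow_right 2
  · refine ⟨t, ?_, by omega, by omega, by omega⟩
    rw [show N = t * 2 + 1 by omega, Nat.coprime_mul_left_add_right]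
    exact Nat.coprime_one_right t

/-- For an integer `N > 8`, `N ≠ 10`, and nonnegative reals `m_k` (`1 ≤ k ≤ ⌊N/2⌋`)
with `m_k ≥ 2` whenever `gcd(k,N) = 1`, one has `Σ_{k=1}^{⌊N/2⌋} m_k cos²(2πk/N) > 2`. -/
theorem statement_15 (N : ℕ) (hN : 8 < N) (hN10 : N ≠ 10) (m : ℕ → ℝ)
    (hm0 : ∀ k, 1 ≤ k → k ≤ N / 2 → 0 ≤ m k)
    (hm2 : ∀ k, 1 ≤ k → k ≤ N / 2 → Nat.gcd k N = 1 → 2 ≤ m k) :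
    2 < ∑ k ∈ Finset.Icc 1 (N / 2), m k * Real.cos (2 * Real.pi * k / N) ^ 2 := by
  obtain ⟨k, hcop, hk2, hkN, hk4⟩ := Nat.exists_coprime_two_le_and_four_mul_gt hN hN10
  have hmem1 : 1 ∈ Finset.Icc 1 (N / 2) := Finset.mem_Icc.2 ⟨le_rfl, by omega⟩
  have hmemk : k ∈ Finset.Icc 1 (N / 2) := Finset.mem_Icc.2 ⟨by omega, by omega⟩
  have hsum := Finset.add_le_sum (f := fun k => m k * cos (2 * π * k / N) ^ 2)
    (fun i hi => mul_nonneg (hm0 i (Finset.mem_Icc.1 hi).1 (Finset.mem_Icc.1 hi).2) (sq_nonneg _))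
    hmem1 hmemk (by omega)
  have h1 : 2 * cos (2 * π / N) ^ 2 ≤ m 1 * cos (2 * π * (1 : ℕ) / N) ^ 2 := by
    rw [Nat.cast_one, mul_one]
    exact mul_le_mul_of_nonneg_right (hm2 1 le_rfl (by omega) (Nat.gcd_one_left N)) (sq_nonneg _)
  have hk : 2 * cos (2 * π * k / N) ^ 2 ≤ m k * cos (2 * π * k / N) ^ 2 :=
    mul_le_mul_of_nonneg_right (hm2 k (by omega) (by omega) hcop) (sq_nonneg _)
  have key := one_lt_cos_sq_two_pi_div_add_cos_sq hkN hk4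
  linarith
end
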